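/- arXiv:1512.02710 — 9 statements merged into one kernel-verified Lean document; each statement's English description precedes it below -/
import Mathlib

section
/- For all integers t ≥ 2, k ≥ 2, we have ((t-1)(k-1))^(1/t) + (t(1-1/k))^(1/(1-t)) ≥ 2. -/
/-!
Write `a = (t - 1)(k - 1)`, `b = t (1 - 1/k)` and `c = (t - 1) k / t`, so that `a = b c`.
Bernoulli's inequality `c ^ t ≥ 1 + t (c - 1)` says exactly `a ≤ c ^ t`, hence
`b = a / c ≤ a ^ (1 - 1/t)`, i.e. `B := b ^ (1/(t-1)) ≤ a ^ (1/t)`. The sum in question is then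
at least `B + B⁻¹ ≥ 2`.
-/

open Real

theorem sub_one_mul_sub_one_le_rpow {t k : ℝ} (ht : 1 ≤ t) (hk : 0 ≤ k) :
    (t - 1) * (k - 1) ≤ ((t - 1) * k / t) ^ t := by
  have ht0 : t ≠ 0 := by positivity
  have hc : 0 ≤ (t - 1) * k / t := by bound
  convert one_add_mul_self_le_rpow_one_add (s := (t - 1) * k / t - 1) (by linarith) ht using 1
  · field_simp
    ring
  · ring_nf

theorem rpow_one_div_sub_one_le_rpow_one_div {t k : ℝ} (ht : 1 < t) (hk : 1 < k) :
    (t * (1 - 1 / k)) ^ (1 / (t - 1)) ≤ ((t - 1) * (k - 1)) ^ (1 / t) := by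
  set a := (t - 1) * (k - 1)
  set c := (t - 1) * k / t
  have ht1 : t - 1 ≠ 0 := by linarith
  have ha : 0 < a := by positivity
  have hc : 0 < c := by positivity
  have hac : a ^ (1 / t) ≤ c := by
    rw [one_div, rpow_inv_le_iff_of_pos ha.le hc.le (by positivity)]
    exact sub_one_mul_sub_one_le_rpow ht.le (by positivity)
  have hb : t * (1 - 1 / k) = a / c := by
    simp only [a, c]
    field_simp
  have hb_le : a / c ≤ (a ^ (1 / t)) ^ (t - 1) :=
    calc a / c ≤ a / a ^ (1 / t) := div_le_div_of_nonneg_left ha.le (by positivity) hac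
      _ = a ^ (1 - 1 / t) := by rw [rpow_sub ha, rpow_one]
      _ = (a ^ (1 / t)) ^ (t - 1) := by
          rw [← rpow_mul ha.le]
          congr 1
          field_simp
  rw [hb, one_div (t - 1), rpow_inv_le_iff_of_pos (by positivity) (by positivity) (by linarith)]
  exact hb_le

theorem two_le_rpow_one_div_add_rpow_one_div_one_sub {t k : ℝ} (ht : 1 < t) (hk : 1 < k) :
    2 ≤ ((t - 1) * (k - 1)) ^ (1 / t) + (t * (1 - 1 / k)) ^ (1 / (1 - t)) := by
  have hb : 0 < t * (1 - 1 / k) := mul_pos (by linarith) (by simp [inv_lt_one_of_one_lt₀ hk])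
  set B := (t * (1 - 1 / k)) ^ (1 / (t - 1))
  have hB : 0 < B := rpow_pos_of_pos hb _
  have hinv : (t * (1 - 1 / k)) ^ (1 / (1 - t)) = B⁻¹ := by
    rw [← rpow_neg hb.le, ← one_div_neg_eq_neg_one_div, neg_sub]
  have hB_add_inv : 2 ≤ B + B⁻¹ := by
    have hsq : B + B⁻¹ - 2 = (B - 1) ^ 2 / B := by field_simp; ring
    have : 0 ≤ (B - 1) ^ 2 / B := by positivity
    linarith
  rw [hinv]
  linarith [rpow_one_div_sub_one_le_rpow_one_div ht hk]

theorem stmt0 (t k : ℤ) (ht : 2 ≤ t) (hk : 2 ≤ k) :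
    (((t : ℝ) - 1) * ((k : ℝ) - 1)) ^ ((1 : ℝ) / (t : ℝ)) +
      ((t : ℝ) * (1 - 1 / (k : ℝ))) ^ ((1 : ℝ) / (1 - (t : ℝ))) ≥ 2 :=
  two_le_rpow_one_div_add_rpow_one_div_one_sub (by exact_mod_cast ht) (by exact_mod_cast hk)
end

section
/- For all real numbers s ≥ 1 and m ≥ 1, (s·m)^(1/(s+1)) · ((m+1)/(m(s+1)))^(1/s) ≥ 1. -/
/-!
Taking logarithms and multiplying by `s (s + 1)`, the claim becomes
`log m - s log s ≤ (s + 1) log ((m + 1) / (s + 1))`. This is Jensen's inequality for the concave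
`log` at the points `m` and `1 / s` with weights `1 / (s + 1)` and `s / (s + 1)`, whose barycenter
is `(m + 1) / (s + 1)`.
-/

open Real

theorem log_sub_mul_log_le_mul_log_barycenter {s m : ℝ} (hs : 0 < s) (hm : 0 < m) :
    log m - s * log s ≤ (s + 1) * log ((m + 1) / (s + 1)) := by
  have hs1 : 0 < s + 1 := by linarith
  have jensen := strictConcaveOn_log_Ioi.concaveOn.2 (Set.mem_Ioi.2 hm)
    (Set.mem_Ioi.2 (inv_pos.2 hs)) (by positivity : 0 ≤ 1 / (s + 1))
    (by positivity : 0 ≤ s / (s + 1)) (by field_simp; ring)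
  have barycenter : 1 / (s + 1) * m + s / (s + 1) * s⁻¹ = (m + 1) / (s + 1) := by
    field_simp
  simp only [smul_eq_mul, barycenter, log_inv] at jensen
  calc log m - s * log s = (s + 1) * (1 / (s + 1) * log m + s / (s + 1) * -log s) := by
        field_simp; ring
    _ ≤ (s + 1) * log ((m + 1) / (s + 1)) := by gcongr

theorem stmt1 (s m : ℝ) (hs : 1 ≤ s) (hm : 1 ≤ m) :
    (s * m) ^ (1 / (s + 1)) * ((m + 1) / (m * (s + 1))) ^ (1 / s) ≥ 1 := by
  have hs0 : 0 < s := by linarith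
  have hm0 : 0 < m := by linarith
  have hs1 : 0 < s + 1 := by linarith
  have jensen := log_sub_mul_log_le_mul_log_barycenter hs0 hm0
  rw [log_div (by positivity) hs1.ne'] at jensen
  rw [ge_iff_le, ← log_nonneg_iff (by positivity), log_mul (by positivity) (by positivity),
    log_rpow (by positivity), log_rpow (by positivity), log_mul hs0.ne' hm0.ne',
    log_div (by positivity) (by positivity), log_mul hm0.ne' hs1.ne']
  have log_lhs : 1 / (s + 1) * (log s + log m) + 1 / s * (log (m + 1) - (log m + log (s + 1)))
      = ((s + 1) * (log (m + 1) - log (s + 1)) - (log m - s * log s)) / (s * (s + 1)) := by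
    field_simp; ring
  rw [log_lhs]
  exact div_nonneg (sub_nonneg.2 jensen) (by positivity)
end

section
/- For all real numbers s ≥ 1 and m ≥ 1, (s·m)^s · ((m+1)/(m(s+1)))^(s+1) ≥ 1, equivalently (s^s / m) · ((m+1)/(s+1))^(s+1) ≥ 1. -/
open Real

/- Weighted AM-GM with weights s/(s+1) and 1/(s+1) on m/s and 1 gives
(m/s)^(s/(s+1)) ≤ (m+1)/(s+1); raising to the power s+1 and using m ≤ m^s gives
m/s^s ≤ ((m+1)/(s+1))^(s+1). The first form of the claim is the second one rewritten. -/

theorem rpow_div_self_le_rpow_add_one_div {s m : ℝ} (hs : 0 < s) (hm : 0 ≤ m) :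
    (m / s) ^ s ≤ ((m + 1) / (s + 1)) ^ (s + 1) := by
  have hs1 : 0 < s + 1 := by linarith
  have amgm : (m / s) ^ (s / (s + 1)) * 1 ^ (1 / (s + 1)) ≤
      s / (s + 1) * (m / s) + 1 / (s + 1) * 1 :=
    geom_mean_le_arith_mean2_weighted (by positivity) (by positivity) (by positivity)
      zero_le_one (by field_simp)
  have amgm' : (m / s) ^ (s / (s + 1)) ≤ (m + 1) / (s + 1) := by
    convert amgm using 1
    · rw [one_rpow, mul_one]
    · field_simp
  calc (m / s) ^ s = ((m / s) ^ (s / (s + 1))) ^ (s + 1) := by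
        rw [← rpow_mul (by positivity), div_mul_cancel₀ s hs1.ne']
    _ ≤ ((m + 1) / (s + 1)) ^ (s + 1) := by gcongr

theorem one_le_rpow_self_div_mul_rpow {s m : ℝ} (hs : 1 ≤ s) (hm : 1 ≤ m) :
    1 ≤ s ^ s / m * ((m + 1) / (s + 1)) ^ (s + 1) := by
  have hs0 : 0 < s := by linarith
  have hm0 : 0 < m := by linarith
  have hss : 0 < s ^ s := rpow_pos_of_pos hs0 s
  have key : m / s ^ s ≤ ((m + 1) / (s + 1)) ^ (s + 1) :=
    calc m / s ^ s ≤ m ^ s / s ^ s := by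
          gcongr
          simpa using rpow_le_rpow_of_exponent_le hm hs
      _ = (m / s) ^ s := (div_rpow hm0.le hs0.le s).symm
      _ ≤ _ := rpow_div_self_le_rpow_add_one_div hs0 hm0.le
  rw [div_mul_eq_mul_div, le_div_iff₀ hm0, one_mul, mul_comm, ← div_le_iff₀ hss]
  exact key

theorem mul_rpow_mul_div_mul_rpow_eq {s m : ℝ} (hs : 0 ≤ s) (hm : 0 < m) :
    (s * m) ^ s * ((m + 1) / (m * (s + 1))) ^ (s + 1) =
      s ^ s / m * ((m + 1) / (s + 1)) ^ (s + 1) := by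
  have hm' : m ^ s ≠ 0 := by positivity
  rw [mul_comm m, ← div_div, div_rpow (by positivity) hm.le, rpow_add_one hm.ne',
    mul_rpow hs hm.le]
  field_simp

theorem stmt2 (s m : ℝ) (hs : 1 ≤ s) (hm : 1 ≤ m) :
    (s * m) ^ s * ((m + 1) / (m * (s + 1))) ^ (s + 1) ≥ 1 ∧
      (s ^ s / m) * ((m + 1) / (s + 1)) ^ (s + 1) ≥ 1 := by
  have h := one_le_rpow_self_div_mul_rpow hs hm
  rw [ge_iff_le, ge_iff_le, mul_rpow_mul_div_mul_rpow_eq (by linarith) (by linarith)]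
  exact ⟨h, h⟩
end

section
/- For all real numbers s ≥ 1 and m ≥ 1, (s·m)^(1/(s+1)) + ((m+1)/(m(s+1)))^(1/s) ≥ 2. -/
/-! Both summands are positive, so by AM-GM it suffices that their product is at least `1`.
The logarithm of the product is `(s log (s m) + (s + 1) log ((m + 1) / (m (s + 1)))) / (s (s + 1))`,
and the numerator splits as `[s log s - (s + 1) log ((s + 1) / 2)] + [(s + 1) log ((m + 1) / 2) - log m]`.
The first bracket is nonnegative by convexity of `x log x`, the second because
`m ≤ ((m + 1) / 2) ^ 2` and `(m + 1) / 2 ≥ 1`, `s + 1 ≥ 2`. -/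

open Real

theorem two_le_add_of_one_le_mul {a b : ℝ} (ha : 0 ≤ a) (hb : 0 ≤ b) (hab : 1 ≤ a * b) :
    2 ≤ a + b := by
  nlinarith [sq_nonneg (a - b)]

theorem Real.add_one_mul_log_half_add_one_le {s : ℝ} (hs : 0 < s) :
    (s + 1) * log ((s + 1) / 2) ≤ s * log s := by
  have hleft : log ((s + 1) / (2 * s)) ≤ (s + 1) / (2 * s) - 1 :=
    log_le_sub_one_of_pos (by positivity)
  have hright : log ((s + 1) / 2) ≤ (s + 1) / 2 - 1 := log_le_sub_one_of_pos (by positivity)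
  have hsplit : log ((s + 1) / (2 * s)) = log ((s + 1) / 2) - log s := by
    rw [← log_div (by positivity) hs.ne', div_div, mul_comm]
  have hscale : s * ((s + 1) / (2 * s) - 1) = (s + 1) / 2 - s := by field_simp
  rw [hsplit] at hleft
  nlinarith [mul_le_mul_of_nonneg_left hleft hs.le]

theorem Real.log_le_mul_log_half_add_one {m t : ℝ} (hm : 1 ≤ m) (ht : 2 ≤ t) :
    log m ≤ t * log ((m + 1) / 2) := by
  have hamgm : m ≤ ((m + 1) / 2) ^ 2 := by nlinarith [sq_nonneg (m - 1)]
  have hlog_nonneg : 0 ≤ log ((m + 1) / 2) := log_nonneg (by linarith)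
  calc log m ≤ log (((m + 1) / 2) ^ 2) := log_le_log (by linarith) hamgm
    _ = 2 * log ((m + 1) / 2) := by rw [log_pow, Nat.cast_ofNat]
    _ ≤ t * log ((m + 1) / 2) := by gcongr

theorem mul_log_add_mul_log_nonneg {s m : ℝ} (hs : 1 ≤ s) (hm : 1 ≤ m) :
    0 ≤ s * log (s * m) + (s + 1) * log ((m + 1) / (m * (s + 1))) := by
  have hs0 : 0 < s := by linarith
  have hm0 : 0 < m := by linarith
  have hsplit : log ((m + 1) / (m * (s + 1))) = log ((m + 1) / 2) - log m - log ((s + 1) / 2) := by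
    rw [show (m + 1) / (m * (s + 1)) = (m + 1) / 2 / (m * ((s + 1) / 2)) by field_simp,
      log_div (by positivity) (by positivity), log_mul hm0.ne' (by positivity)]
    ring
  rw [log_mul hs0.ne' hm0.ne', hsplit]
  nlinarith [add_one_mul_log_half_add_one_le hs0,
    log_le_mul_log_half_add_one hm (show 2 ≤ s + 1 by linarith)]

theorem one_le_rpow_mul_rpow {s m : ℝ} (hs : 1 ≤ s) (hm : 1 ≤ m) :
    1 ≤ (s * m) ^ (1 / (s + 1)) * ((m + 1) / (m * (s + 1))) ^ (1 / s) := by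
  have hs0 : 0 < s := by linarith
  have hm0 : 0 < m := by linarith
  rw [rpow_def_of_pos (by positivity), rpow_def_of_pos (by positivity), ← exp_add]
  apply one_le_exp
  have hexp : log (s * m) * (1 / (s + 1)) + log ((m + 1) / (m * (s + 1))) * (1 / s) =
      (s * log (s * m) + (s + 1) * log ((m + 1) / (m * (s + 1)))) / (s * (s + 1)) := by
    field_simp
  rw [hexp]
  exact div_nonneg (mul_log_add_mul_log_nonneg hs hm) (by positivity)

theorem stmt3 (s m : ℝ) (hs : 1 ≤ s) (hm : 1 ≤ m) :
    (s * m) ^ (1 / (s + 1)) + ((m + 1) / (m * (s + 1))) ^ (1 / s) ≥ 2 :=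
  two_le_add_of_one_le_mul (by positivity) (by positivity) (one_le_rpow_mul_rpow hs hm)
end

section
/- Let t ≥ 2 and k ≥ 2 be integers and define g(n) = (1 + ((t(1-1/k))^(1/(t-1)) - 1)·n) / ((t-1)(k-1))^(n/t) for natural numbers n. Then g is non-increasing: g(n+1) ≤ g(n) for all n ≥ 0. -/
/-!
Write `a = (t (1 - 1/k))^(1/(t-1))` and `b = ((t-1)(k-1))^(1/t)`. Since the denominator of `g`
gains a factor `b` at each step, `g (n+1) ≤ g n` amounts to `1 + (a-1)(n+1) ≤ (1 + (a-1)n) b`,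
which follows from `1 ≤ a ≤ b`. Raised to the power `t(t-1)`, the inequality `a ≤ b` becomes
`t^t (k-1) ≤ k^t (t-1)^(t-1)`, which is the weighted AM-GM inequality for `t(k-1)` and `t/(t-1)`
with weights `1/t` and `(t-1)/t` (their weighted mean is `k`).
-/

open Real

lemma rpow_self_mul_sub_one_le {T K : ℝ} (hT : 1 < T) (hK : 1 < K) :
    T ^ T * (K - 1) ≤ K ^ T * (T - 1) ^ (T - 1) := by
  have hT0 : 0 < T := by linarith
  have hT1 : 0 < T - 1 := by linarith
  have amgm : (T * (K - 1)) ^ (1 / T) * (T / (T - 1)) ^ ((T - 1) / T) ≤ K := by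
    convert geom_mean_le_arith_mean2_weighted (w₁ := 1 / T) (w₂ := (T - 1) / T)
      (p₁ := T * (K - 1)) (p₂ := T / (T - 1)) (by positivity) (by positivity)
      (by nlinarith) (by positivity) (by field_simp; ring) using 1
    field_simp
    ring
  have hpow := rpow_le_rpow (by positivity) amgm hT0.le
  rw [mul_rpow (by positivity) (by positivity), ← rpow_mul (by nlinarith),
    ← rpow_mul (by positivity), one_div_mul_cancel hT0.ne',
    div_mul_cancel₀ _ hT0.ne', rpow_one, div_rpow hT0.le hT1.le, mul_div_assoc'] at hpow
  have hTT : T * T ^ (T - 1) = T ^ T := by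
    rw [mul_comm, ← rpow_add_one hT0.ne', sub_add_cancel]
  rwa [mul_right_comm, hTT, div_le_iff₀ (by positivity)] at hpow

lemma mul_one_sub_one_div_rpow_le {T K : ℝ} (hT : 1 < T) (hK : 1 < K) :
    (T * (1 - 1 / K)) ^ (1 / (T - 1)) ≤ ((T - 1) * (K - 1)) ^ (1 / T) := by
  have hT0 : 0 < T := by linarith
  have hT1 : 0 < T - 1 := by linarith
  have hK0 : 0 < K := by linarith
  have hK1 : 0 < K - 1 := by linarith
  have hbase : T * (1 - 1 / K) = T * (K - 1) / K := by field_simp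
  rw [hbase, ← rpow_le_rpow_iff (z := T * (T - 1)) (by positivity) (by positivity)
    (by positivity), ← rpow_mul (by positivity), ← rpow_mul (by positivity),
    one_div_mul_eq_div, one_div_mul_eq_div, mul_div_cancel_right₀ _ hT1.ne',
    mul_div_cancel_left₀ _ hT0.ne', div_rpow (by positivity) hK0.le,
    div_le_iff₀ (by positivity), mul_rpow hT0.le hK1.le, mul_rpow hT1.le hK1.le,
    ← sub_add_cancel T 1, rpow_add_one hK1.ne', sub_add_cancel]
  calc T ^ T * ((K - 1) ^ (T - 1) * (K - 1))
      = (K - 1) ^ (T - 1) * (T ^ T * (K - 1)) := by ring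
    _ ≤ (K - 1) ^ (T - 1) * (K ^ T * (T - 1) ^ (T - 1)) :=
      mul_le_mul_of_nonneg_left (rpow_self_mul_sub_one_le hT hK) (by positivity)
    _ = (T - 1) ^ (T - 1) * (K - 1) ^ (T - 1) * K ^ T := by ring

lemma one_add_mul_div_rpow_succ_le {a B T : ℝ} (hB : 0 < B) (ha : 1 ≤ a)
    (haB : a ≤ B ^ (1 / T)) {x : ℝ} (hx : 0 ≤ x) :
    (1 + (a - 1) * (x + 1)) / B ^ ((x + 1) / T) ≤ (1 + (a - 1) * x) / B ^ (x / T) := by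
  have hnum : 0 ≤ 1 + (a - 1) * x := by nlinarith
  have hstep : 1 + (a - 1) * (x + 1) ≤ (1 + (a - 1) * x) * B ^ (1 / T) :=
    calc 1 + (a - 1) * (x + 1) ≤ (1 + (a - 1) * x) * a := by
          nlinarith [mul_nonneg (sub_nonneg.2 ha) (sub_nonneg.2 ha)]
      _ ≤ (1 + (a - 1) * x) * B ^ (1 / T) := mul_le_mul_of_nonneg_left haB hnum
  rw [add_div x 1 T, rpow_add hB, div_le_div_iff₀ (by positivity) (by positivity)]
  calc (1 + (a - 1) * (x + 1)) * B ^ (x / T)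
      ≤ (1 + (a - 1) * x) * B ^ (1 / T) * B ^ (x / T) :=
        mul_le_mul_of_nonneg_right hstep (by positivity)
    _ = (1 + (a - 1) * x) * (B ^ (x / T) * B ^ (1 / T)) := by ring

theorem stmt4 (t k : ℤ) (ht : 2 ≤ t) (hk : 2 ≤ k) (g : ℕ → ℝ)
    (hg : ∀ n : ℕ, g n =
      (1 + (((t : ℝ) * (1 - 1 / (k : ℝ))) ^ ((1 : ℝ) / ((t : ℝ) - 1)) - 1) * (n : ℝ)) /
        (((t : ℝ) - 1) * ((k : ℝ) - 1)) ^ ((n : ℝ) / (t : ℝ))) :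
    ∀ n : ℕ, g (n + 1) ≤ g n := by
  intro n
  have hT : (2 : ℝ) ≤ t := by exact_mod_cast ht
  have hK : (2 : ℝ) ≤ k := by exact_mod_cast hk
  have hbase : 1 ≤ (t : ℝ) * (1 - 1 / k) := by
    have : 1 / (k : ℝ) ≤ 1 / 2 := one_div_le_one_div_of_le (by norm_num) hK
    nlinarith
  have ha := one_le_rpow hbase (z := 1 / ((t : ℝ) - 1)) (by rw [one_div_nonneg]; linarith)
  rw [hg, hg]
  push_cast
  exact one_add_mul_div_rpow_succ_le (by nlinarith) ha
    (mul_one_sub_one_div_rpow_le (by linarith) (by linarith)) n.cast_nonneg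
end

section
/- Let t ≥ 2, k ≥ 2 be integers with t > 2 or k > 2. Then for every n ≥ 1, 1 + ((t(1-1/k))^(1/(t-1)) - 1) / (1 + ((t(1-1/k))^(1/(t-1)) - 1)·n) ≤ ((t-1)(k-1))^(1/t). -/
/-!
Writing `x = t (1 - 1/k)` and `y = (t - 1)(k - 1)`, the claim `x ^ (1/(t-1)) ≤ y ^ (1/t)` is
equivalent to `x ^ t ≤ y ^ (t - 1)`, i.e. to `t ^ t (k - 1) ≤ (t - 1) ^ (t - 1) k ^ t`, which is
Bernoulli's inequality `1 + t (u - 1) ≤ u ^ t` at `u = (t - 1) k / t`. The left-hand side of the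
theorem is at most `x ^ (1/(t-1))`, since `c / (1 + c n) ≤ c` for `c ≥ 0`.
-/

open Real

theorem rpow_self_mul_sub_one_le_s5 {t k : ℝ} (ht : 1 < t) (hk : 0 ≤ k) :
    t ^ t * (k - 1) ≤ (t - 1) ^ (t - 1) * k ^ t := by
  have ht0 : 0 < t := by linarith
  have ht1 : 0 < t - 1 := by linarith
  set u := (t - 1) * k / t with hu
  have hu0 : 0 ≤ u := by positivity
  have hbernoulli : 1 + t * (u - 1) ≤ u ^ t := by
    simpa using one_add_mul_self_le_rpow_one_add (s := u - 1) (by linarith) ht.le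
  have hupow : u ^ t = (t - 1) ^ (t - 1) * (t - 1) * k ^ t / t ^ t := by
    rw [hu, div_rpow (by positivity) ht0.le, mul_rpow ht1.le hk, ← rpow_add_one ht1.ne']
    ring_nf
  have htt : 0 < t ^ t := rpow_pos_of_pos ht0 t
  rw [hupow, le_div_iff₀ htt] at hbernoulli
  have hscaled : t ^ t * (k - 1) * (t - 1) ≤ (t - 1) ^ (t - 1) * k ^ t * (t - 1) := by
    calc t ^ t * (k - 1) * (t - 1) = (1 + t * (u - 1)) * t ^ t := by
          rw [hu]; field_simp; ring
      _ ≤ _ := hbernoulli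
      _ = _ := by ring
  exact le_of_mul_le_mul_right hscaled ht1

theorem mul_one_sub_inv_rpow_le {t k : ℝ} (ht : 1 < t) (hk : 1 ≤ k) :
    (t * (1 - 1 / k)) ^ (1 / (t - 1)) ≤ ((t - 1) * (k - 1)) ^ (1 / t) := by
  have ht0 : 0 < t := by linarith
  have ht1 : 0 < t - 1 := by linarith
  have hk0 : 0 < k := by linarith
  have hx : 0 ≤ t * (1 - 1 / k) := by
    have hinv : 1 / k ≤ 1 := by rw [div_le_one hk0]; exact hk
    nlinarith
  have hy : 0 ≤ (t - 1) * (k - 1) := by nlinarith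
  have hpow : (t * (1 - 1 / k)) ^ t ≤ ((t - 1) * (k - 1)) ^ (t - 1) := by
    have hsplit : (k - 1) ^ t = (k - 1) ^ (t - 1) * (k - 1) := by
      rw [← rpow_add_one' (by linarith) (by linarith)]; ring_nf
    have hx' : t * (1 - 1 / k) = t * (k - 1) / k := by field_simp
    rw [hx', div_rpow (by nlinarith) hk0.le, mul_rpow ht0.le (by linarith),
      mul_rpow ht1.le (by linarith), div_le_iff₀ (rpow_pos_of_pos hk0 t), hsplit]
    calc t ^ t * ((k - 1) ^ (t - 1) * (k - 1))
        = (t ^ t * (k - 1)) * (k - 1) ^ (t - 1) := by ring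
      _ ≤ ((t - 1) ^ (t - 1) * k ^ t) * (k - 1) ^ (t - 1) :=
          mul_le_mul_of_nonneg_right (rpow_self_mul_sub_one_le_s5 ht hk0.le)
            (rpow_nonneg (by linarith) _)
      _ = _ := by ring
  rw [← rpow_le_rpow_iff (rpow_nonneg hx _) (rpow_nonneg hy _) (mul_pos ht0 ht1),
    ← rpow_mul hx, ← rpow_mul hy]
  convert hpow using 2 <;> field_simp

theorem stmt5_general (t k : ℤ) (ht : 2 ≤ t) (hk : 2 ≤ k)
    (n : ℕ) :
    1 + (((t : ℝ) * (1 - 1 / (k : ℝ))) ^ ((1 : ℝ) / ((t : ℝ) - 1)) - 1) /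
        (1 + (((t : ℝ) * (1 - 1 / (k : ℝ))) ^ ((1 : ℝ) / ((t : ℝ) - 1)) - 1) * (n : ℝ)) ≤
      (((t : ℝ) - 1) * ((k : ℝ) - 1)) ^ ((1 : ℝ) / (t : ℝ)) := by
  have ht' : (2 : ℝ) ≤ t := by exact_mod_cast ht
  have hk' : (2 : ℝ) ≤ k := by exact_mod_cast hk
  set a := ((t : ℝ) * (1 - 1 / (k : ℝ))) ^ ((1 : ℝ) / ((t : ℝ) - 1))
  have ha : 1 ≤ a := by
    refine one_le_rpow ?_ (by bound)
    have hinv : 1 / (k : ℝ) ≤ 1 / 2 := by bound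
    nlinarith
  have hdiv : (a - 1) / (1 + (a - 1) * n) ≤ a - 1 :=
    div_le_self (by linarith) (by nlinarith [(n.cast_nonneg : (0 : ℝ) ≤ n)])
  have hab : a ≤ (((t : ℝ) - 1) * ((k : ℝ) - 1)) ^ ((1 : ℝ) / (t : ℝ)) :=
    mul_one_sub_inv_rpow_le (by linarith) (by linarith)
  linarith

theorem stmt5 (t k : ℤ) (ht : 2 ≤ t) (hk : 2 ≤ k) (htk : 2 < t ∨ 2 < k)
    (n : ℕ) (hn : 1 ≤ n) :
    1 + (((t : ℝ) * (1 - 1 / (k : ℝ))) ^ ((1 : ℝ) / ((t : ℝ) - 1)) - 1) /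
        (1 + (((t : ℝ) * (1 - 1 / (k : ℝ))) ^ ((1 : ℝ) / ((t : ℝ) - 1)) - 1) * (n : ℝ)) ≤
      (((t : ℝ) - 1) * ((k : ℝ) - 1)) ^ ((1 : ℝ) / (t : ℝ)) :=
  stmt5_general t k ht hk n
end

section
/- Let t ≥ 2, k ≥ 2 be integers and define g(n) = ĝ(n)/((t-1)(k-1))^(n/t) where ĝ(n) = 1 + ((t(1-1/k))^(1/(t-1)) - 1)·n. Then for every n ≥ 1, g(n-1)·g(n)^(t-2) + (k-1)·g(n+1)^(t-1) ≥ (t/(t-1))·((t-1)(k-1))^(1/t)·g(n)^(t-1). -/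
/-!
With `A = ((t-1)(k-1))^(1/t)` and `c = (t(1-1/k))^(1/(t-1)) - 1 ≥ 0` we have
`g n = (1 + c n) / A ^ n`. Since `A ^ t = (t-1)(k-1)`, multiplying the inequality by
`(t-1) A^(n(t-1)-1)` removes every power of `A` and leaves, with `x = ĝ n`,
`t x^(t-1) ≤ (t-1)(x-c) x^(t-2) + (x+c)^(t-1)`. This is Bernoulli's inequality
`(x+c)^(t-1) ≥ x^(t-1) + (t-1) c x^(t-2)`; any `c ≥ 0` would do.
-/

variable {R : Type*} [Field R] [LinearOrder R] [IsStrictOrderedRing R]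

theorem add_two_mul_pow_succ_le (s : ℕ) {x c : R} (hx : 0 ≤ x) (hc : 0 ≤ 2 * x + c) :
    ((s : R) + 2) * x ^ (s + 1) ≤ ((s : R) + 1) * (x - c) * x ^ s + (x + c) ^ (s + 1) := by
  have bernoulli := pow_add_mul_le_add_pow hx hc (s + 1)
  simp only [add_tsub_cancel_right, Nat.cast_succ] at bernoulli
  nlinarith [pow_succ x s]

theorem three_term_le_of_div_geom {s : ℕ} {T K A P u v w : R} (hT : 1 < T) (hA : 0 < A)
    (hP : 0 < P) (hAT : A ^ (s + 2) = (T - 1) * K)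
    (h : T * v ^ (s + 1) ≤ (T - 1) * u * v ^ s + w ^ (s + 1)) :
    T / (T - 1) * A * (v / (P * A)) ^ (s + 1) ≤
      u / P * (v / (P * A)) ^ s + K * (w / (P * A ^ 2)) ^ (s + 1) := by
  have hT1 : 0 < T - 1 := by linarith
  have hA0 := hA.ne'
  have hP0 := hP.ne'
  obtain rfl : K = A ^ (s + 2) / (T - 1) := by field_simp; linarith
  have lhs_eq : T / (T - 1) * A * (v / (P * A)) ^ (s + 1) =
      T * v ^ (s + 1) / ((T - 1) * P ^ (s + 1) * A ^ s) := by
    simp only [div_pow, mul_pow]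
    field_simp
    ring
  have rhs_eq : u / P * (v / (P * A)) ^ s + A ^ (s + 2) / (T - 1) * (w / (P * A ^ 2)) ^ (s + 1) =
      ((T - 1) * u * v ^ s + w ^ (s + 1)) / ((T - 1) * P ^ (s + 1) * A ^ s) := by
    simp only [div_pow, mul_pow]
    field_simp
    ring
  rw [lhs_eq, rhs_eq]
  gcongr

theorem one_le_mul_one_sub_one_div {t k : R} (ht : 2 ≤ t) (hk : 2 ≤ k) :
    1 ≤ t * (1 - 1 / k) := by
  have : 1 / k ≤ 1 / 2 := one_div_le_one_div_of_le two_pos hk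
  nlinarith

theorem stmt10 (t k : ℕ) (ht : 2 ≤ t) (hk : 2 ≤ k)
    (ghat : ℕ → ℝ)
    (hghat : ∀ n : ℕ, ghat n =
      1 + (((t : ℝ) * (1 - 1 / (k : ℝ))) ^ ((1 : ℝ) / ((t : ℝ) - 1)) - 1) * (n : ℝ))
    (g : ℕ → ℝ)
    (hg : ∀ n : ℕ, g n = ghat n / (((t : ℝ) - 1) * ((k : ℝ) - 1)) ^ ((n : ℝ) / (t : ℝ))) :
    ∀ n : ℕ, 1 ≤ n →
      g (n - 1) * g n ^ (t - 2) + ((k : ℝ) - 1) * g (n + 1) ^ (t - 1) ≥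
        ((t : ℝ) / ((t : ℝ) - 1)) * (((t : ℝ) - 1) * ((k : ℝ) - 1)) ^ ((1 : ℝ) / (t : ℝ)) *
          g n ^ (t - 1) := by
  obtain ⟨s, rfl⟩ : ∃ s, t = s + 2 := ⟨t - 2, by omega⟩
  rintro n hn
  obtain ⟨m, rfl⟩ : ∃ m, n = m + 1 := ⟨n - 1, by omega⟩
  have hk' : (2 : ℝ) ≤ k := by exact_mod_cast hk
  set T : ℝ := ((s + 2 : ℕ) : ℝ)
  have hT : T = s + 2 := by simp only [T]; push_cast; ring
  set c := (T * (1 - 1 / (k : ℝ))) ^ ((1 : ℝ) / (T - 1)) - 1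
  have hc : 0 ≤ c := sub_nonneg.2 <| Real.one_le_rpow
    (one_le_mul_one_sub_one_div (by rw [hT]; linarith) hk')
    (one_div_nonneg.2 (by rw [hT]; linarith))
  have hb : 0 < (T - 1) * ((k : ℝ) - 1) := by rw [hT]; nlinarith
  set A := ((T - 1) * ((k : ℝ) - 1)) ^ ((1 : ℝ) / T)
  have hA : 0 < A := Real.rpow_pos_of_pos hb _
  have hAT : A ^ (s + 2) = (T - 1) * ((k : ℝ) - 1) := by
    simp only [A, T, one_div]
    exact Real.rpow_inv_natCast_pow hb.le (by omega)
  have hg_eq : ∀ j : ℕ, g j = (1 + c * j) / A ^ j := fun j => by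
    rw [hg, hghat, ← one_div_mul_eq_div T (j : ℝ), Real.rpow_mul_natCast hb.le]
  simp only [hg_eq, show s + 2 - 1 = s + 1 from rfl, show s + 2 - 2 = s from rfl,
    show m + 1 - 1 = m from rfl, pow_succ A m, pow_add A m 2]
  have three_term := add_two_mul_pow_succ_le s (x := 1 + c * (m + 1)) (c := c) (by positivity)
    (by positivity)
  refine three_term_le_of_div_geom (by rw [hT]; linarith) hA (by positivity) hAT ?_
  rw [hT]
  push_cast
  convert three_term using 3 <;> ring
end

section
/- Let H be a finite connected k-regular t-uniform hypergraph on vertex set V with adjacency tensor 𝒜 (entries 1/(t-1)! on edges). Fix a vertex o and let x(v) = g(dist(o,v)) where g is the non-increasing function g(n) = ĝ(n)/((t-1)(k-1))^(n/t). Then (𝒜x)_v ≥ ϱ·x(v)^(t-1) for every vertex v, where ϱ = (t/(t-1))·((t-1)(k-1))^(1/t). -/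
/-!
Write `t = n + 2`, `Q = ((t - 1)(k - 1))^(1/t)` and `c = (t(1 - 1/k))^(1/(t - 1))`, so that
`g m = (1 + (c - 1) m) / Q^m`. Bernoulli's inequality gives `c ≤ Q`, hence `g` is positive and
non-increasing. Every vertex sharing an edge with `v` lies within distance `dist(o, v) + 1` of `o`,
so each of the `k` edges through `v` contributes at least `g (dist(o, v) + 1)^(t - 1)`, and at the
root `k * g 1 ^ (t - 1) = ϱ`. If `dist(o, v) = m + 1`, one edge through `v` contains a vertex at
distance `≤ m` and contributes at least `g m * g (m + 1)^(t - 2)`. After clearing the powers of `Q`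
with `Q^t = (t - 1)(k - 1)`, what remains is Bernoulli's inequality
`(b + δ)^(t - 1) ≥ b^(t - 1) + (t - 1) b^(t - 2) δ` for `b = 1 + (c - 1)(m + 1)` and `δ = c - 1`.
-/

open Finset

lemma pow_card_le_prod_of_le {ι R : Type*} [CommSemiring R] [PartialOrder R] [IsOrderedRing R]
    {s : Finset ι} {f : ι → R} {a : R} (ha : 0 ≤ a) (h : ∀ i ∈ s, a ≤ f i) :
    a ^ #s ≤ ∏ i ∈ s, f i := by
  simpa only [prod_const] using prod_le_prod (fun _ _ => ha) h

namespace SimpleGraph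

variable {V : Type*} {G : SimpleGraph V} {u v w : V} {m : ℕ}

lemma Adj.dist_le_dist_add_one (h : G.Adj v w) : G.dist u w ≤ G.dist u v + 1 := by
  rcases h.diff_dist_adj (u := u) with h | h | h <;> omega

lemma exists_adj_dist_le_of_dist_eq_succ (h : G.dist u v = m + 1) :
    ∃ w, G.Adj v w ∧ G.dist u w ≤ m := by
  rw [dist_comm] at h
  obtain ⟨p, hp⟩ := exists_walk_of_dist_ne_zero (by omega : G.dist v u ≠ 0)
  cases p with
  | nil => simp at h
  | cons hadj q =>
    refine ⟨_, hadj, ?_⟩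
    rw [dist_comm]
    have := dist_le q
    simp only [Walk.length_cons, h] at hp
    omega

end SimpleGraph

section Hypergraph

variable {V : Type*} {E : Finset (Finset V)} {G : SimpleGraph V}
  {e : Finset V} {o u v w : V} {φ : ℕ → ℝ} {t k m : ℕ}

def IsPrimalGraph (G : SimpleGraph V) (E : Finset (Finset V)) : Prop :=
  ∀ u v : V, G.Adj u v ↔ u ≠ v ∧ ∃ e ∈ E, u ∈ e ∧ v ∈ e

lemma dist_le_dist_add_one_of_mem_edge (hG : IsPrimalGraph G E)
    (he : e ∈ E) (hu : u ∈ e) (hw : w ∈ e) : G.dist o u ≤ G.dist o w + 1 := by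
  rcases eq_or_ne w u with rfl | hwu
  · omega
  · exact ((hG w u).2 ⟨hwu, e, he, hw, hu⟩).dist_le_dist_add_one

variable [DecidableEq V]

lemma pow_le_prod_erase (hG : IsPrimalGraph G E)
    (hφ0 : ∀ m, 0 ≤ φ m) (hφ : Antitone φ) (he : e ∈ E) (hv : v ∈ e) :
    φ (G.dist o v + 1) ^ (#e - 1) ≤ ∏ u ∈ e.erase v, φ (G.dist o u) := by
  rw [← card_erase_of_mem hv]
  exact pow_card_le_prod_of_le (hφ0 _) fun u hu =>
    hφ (dist_le_dist_add_one_of_mem_edge hG he (mem_of_mem_erase hu) hv)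

lemma mul_pow_le_prod_erase (hG : IsPrimalGraph G E) (hφ0 : ∀ m, 0 ≤ φ m) (hφ : Antitone φ)
    (he : e ∈ E) (hv : v ∈ e) (hw : w ∈ e) (hwv : w ≠ v) (hdw : G.dist o w ≤ m) :
    φ m * φ (m + 1) ^ (#e - 2) ≤ ∏ u ∈ e.erase v, φ (G.dist o u) := by
  have hw' : w ∈ e.erase v := mem_erase.2 ⟨hwv, hw⟩
  have hcard : #((e.erase v).erase w) = #e - 2 := by
    rw [card_erase_of_mem hw', card_erase_of_mem hv]; omega
  rw [← mul_prod_erase _ _ hw', ← hcard]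
  refine mul_le_mul (hφ hdw) (pow_card_le_prod_of_le (hφ0 _) fun u hu => hφ ?_)
    (pow_nonneg (hφ0 _) _) (hφ0 _)
  have := dist_le_dist_add_one_of_mem_edge (o := o) hG he
    (mem_of_mem_erase (mem_of_mem_erase hu)) hw
  omega

lemma mul_pow_le_sum_prod (hG : IsPrimalGraph G E)
    (hφ0 : ∀ m, 0 ≤ φ m) (hφ : Antitone φ) (huniform : ∀ e ∈ E, #e = t)
    (hdeg : #(E.filter (fun e => v ∈ e)) = k) :
    k * φ (G.dist o v + 1) ^ (t - 1) ≤
      ∑ e ∈ E.filter (fun e => v ∈ e), ∏ u ∈ e.erase v, φ (G.dist o u) := by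
  rw [← hdeg, ← nsmul_eq_mul]
  refine card_nsmul_le_sum _ _ _ fun e he => ?_
  rw [mem_filter] at he
  rw [← huniform e he.1]
  exact pow_le_prod_erase hG hφ0 hφ he.1 he.2

lemma add_mul_pow_le_sum_prod (hG : IsPrimalGraph G E)
    (hφ0 : ∀ m, 0 ≤ φ m) (hφ : Antitone φ) (huniform : ∀ e ∈ E, #e = t)
    (hdeg : #(E.filter (fun e => v ∈ e)) = k) (hd : G.dist o v = m + 1) :
    φ m * φ (m + 1) ^ (t - 2) + (k - 1 : ℝ) * φ (m + 2) ^ (t - 1) ≤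
      ∑ e ∈ E.filter (fun e => v ∈ e), ∏ u ∈ e.erase v, φ (G.dist o u) := by
  obtain ⟨w, hvw, hdw⟩ := G.exists_adj_dist_le_of_dist_eq_succ hd
  obtain ⟨hvw', e, he, hve, hwe⟩ := (hG v w).1 hvw
  have he' : e ∈ E.filter (fun e => v ∈ e) := mem_filter.2 ⟨he, hve⟩
  rw [← add_sum_erase _ _ he']
  gcongr ?_ + ?_
  · rw [← huniform e he]
    exact mul_pow_le_prod_erase hG hφ0 hφ he hve hwe hvw'.symm hdw
  · have hcard : #((E.filter (fun e => v ∈ e)).erase e) = (k - 1 : ℝ) := by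
      rw [card_erase_of_mem he', hdeg, Nat.cast_pred (hdeg ▸ card_pos.2 ⟨e, he'⟩)]
    rw [← hcard, ← nsmul_eq_mul]
    refine card_nsmul_le_sum _ _ _ fun e he => ?_
    obtain ⟨he1, he2⟩ := mem_filter.1 (mem_of_mem_erase he)
    rw [← huniform e he1, show m + 2 = G.dist o v + 1 by omega]
    exact pow_le_prod_erase hG hφ0 hφ he1 he2

end Hypergraph

section Profile

/- The edge size is `n + 2`, so that the exponents `t - 1 = n + 1` and `t - 2 = n` involve no
truncated subtraction. -/

variable {n : ℕ} {k c Q : ℝ}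

lemma mul_one_sub_inv_pow_le (hk : 1 < k) :
    ((n + 2) * (1 - 1 / k)) ^ (n + 2) ≤ ((n + 1) * (k - 1)) ^ (n + 1) := by
  have hq : 0 < (n + 1) * (k - 1) := mul_pos (by positivity) (by linarith)
  have hbern : (n + 2 : ℝ) ^ (n + 2) * ((n + 1) * (k - 1)) ≤ ((n + 1) * k) ^ (n + 2) := by
    have h := pow_add_mul_le_add_pow (a := (n + 2 : ℝ)) (b := (n + 1) * (k - 1) - 1)
      (by positivity) (by linarith) (n + 2)
    push_cast [show n + 2 - 1 = n + 1 from rfl] at h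
    calc _ = (n + 2 : ℝ) ^ (n + 2) + (n + 2) * (n + 2) ^ (n + 1) * ((n + 1) * (k - 1) - 1) := by
          ring
      _ ≤ _ := h
      _ = _ := by ring
  refine le_of_mul_le_mul_right ?_ hq
  calc ((n + 2) * (1 - 1 / k)) ^ (n + 2) * ((n + 1) * (k - 1))
      = (n + 2 : ℝ) ^ (n + 2) * ((n + 1) * (k - 1)) * (1 - 1 / k) ^ (n + 2) := by
        rw [mul_pow]; ring
    _ ≤ ((n + 1) * k) ^ (n + 2) * (1 - 1 / k) ^ (n + 2) := by
        refine mul_le_mul_of_nonneg_right hbern (pow_nonneg ?_ _)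
        rw [sub_nonneg, div_le_one] <;> linarith
    _ = ((n + 1) * (k - 1)) ^ (n + 1) * ((n + 1) * (k - 1)) := by
        rw [← mul_pow, ← pow_succ]
        congr 1
        field_simp

lemma le_of_pow_eq_of_pow_eq (hk : 1 < k) (hc0 : 0 ≤ c) (hQ0 : 0 ≤ Q)
    (hc : c ^ (n + 1) = (n + 2) * (1 - 1 / k)) (hQ : Q ^ (n + 2) = (n + 1) * (k - 1)) :
    c ≤ Q := by
  refine (pow_le_pow_iff_left₀ hc0 hQ0 (n := (n + 1) * (n + 2)) (by positivity)).1 ?_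
  calc c ^ ((n + 1) * (n + 2)) = ((n + 2) * (1 - 1 / k)) ^ (n + 2) := by rw [pow_mul, hc]
    _ ≤ ((n + 1) * (k - 1)) ^ (n + 1) := mul_one_sub_inv_pow_le hk
    _ = Q ^ ((n + 1) * (n + 2)) := by rw [pow_mul', hQ]

noncomputable def radialProfile (c Q : ℝ) (m : ℕ) : ℝ := (1 + (c - 1) * m) / Q ^ m

lemma radialProfile_pos (hc : 1 ≤ c) (hQ : 0 < Q) (m : ℕ) : 0 < radialProfile c Q m := by
  unfold radialProfile
  have : 0 ≤ (c - 1) * m := mul_nonneg (by linarith) m.cast_nonneg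
  positivity

lemma radialProfile_antitone (hc : 1 ≤ c) (hcQ : c ≤ Q) : Antitone (radialProfile c Q) := by
  refine antitone_nat_of_succ_le fun m => ?_
  have hQ : 0 < Q := by linarith
  unfold radialProfile
  rw [div_le_div_iff₀ (by positivity) (by positivity), pow_succ, mul_comm (Q ^ m) Q,
    ← mul_assoc]
  gcongr ?_ * _
  calc 1 + (c - 1) * ((m + 1 : ℕ) : ℝ) ≤ (1 + (c - 1) * m) * c := by
        push_cast
        nlinarith [mul_nonneg (mul_nonneg (sub_nonneg.2 hc) (sub_nonneg.2 hc)) m.cast_nonneg]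
    _ ≤ (1 + (c - 1) * m) * Q := by gcongr

lemma mul_radialProfile_one_pow (hk : k ≠ 0) (hQ0 : Q ≠ 0)
    (hc : c ^ (n + 1) = (n + 2) * (1 - 1 / k)) (hQ : Q ^ (n + 2) = (n + 1) * (k - 1)) :
    k * radialProfile c Q 1 ^ (n + 1) = (n + 2) / (n + 1) * Q := by
  simp only [radialProfile, Nat.cast_one, mul_one, add_sub_cancel, pow_one, div_pow, hc]
  field_simp
  rw [← pow_succ, hQ]
  ring

lemma radialProfile_step (hc : 1 ≤ c) (hQ0 : 0 < Q) (hQ : Q ^ (n + 2) = (n + 1) * (k - 1))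
    (m : ℕ) :
    (n + 2) / (n + 1) * Q * radialProfile c Q (m + 1) ^ (n + 1) ≤
      radialProfile c Q m * radialProfile c Q (m + 1) ^ n +
        (k - 1) * radialProfile c Q (m + 2) ^ (n + 1) := by
  obtain ⟨δ, hδ, rfl⟩ : ∃ δ, 0 ≤ δ ∧ c = 1 + δ := ⟨c - 1, by linarith, by ring⟩
  set b : ℝ := 1 + δ * (m + 1)
  have hb : 0 < b := by positivity
  have hu : 0 < Q ^ (m + 1) := by positivity
  have h0 : radialProfile (1 + δ) Q m = (b - δ) * Q / Q ^ (m + 1) := by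
    rw [radialProfile, pow_succ]; field_simp; ring
  have h1 : radialProfile (1 + δ) Q (m + 1) = b / Q ^ (m + 1) := by
    rw [radialProfile]; push_cast; ring
  have h2 : radialProfile (1 + δ) Q (m + 2) = (b + δ) / (Q ^ (m + 1) * Q) := by
    rw [radialProfile, ← pow_succ]; push_cast; ring
  have hbern : b ^ (n + 1) + (n + 1) * b ^ n * δ ≤ (b + δ) ^ (n + 1) := by
    simpa using pow_add_mul_le_add_pow hb.le (by linarith) (n + 1)
  have hk : k - 1 = Q ^ (n + 2) / (n + 1) := by rw [hQ]; field_simp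
  rw [h0, h1, h2, hk]
  generalize Q ^ (m + 1) = u at hu ⊢
  simp only [div_pow, mul_pow]
  calc _ = Q / ((n + 1) * u ^ (n + 1)) * ((n + 2) * b ^ (n + 1)) := by
        field_simp
    _ ≤ Q / ((n + 1) * u ^ (n + 1)) * ((n + 1) * (b - δ) * b ^ n + (b + δ) ^ (n + 1)) := by
        gcongr
        linear_combination hbern
    _ = _ := by field_simp; ring

end Profile

theorem mul_radialProfile_pow_le_sum_prod {V : Type*} [DecidableEq V] {E : Finset (Finset V)}
    {G : SimpleGraph V} {n k : ℕ} {c Q : ℝ} (hk : 1 < k) (hc1 : 1 ≤ c) (hQ0 : 0 < Q)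
    (hc : c ^ (n + 1) = (n + 2) * (1 - 1 / k)) (hQ : Q ^ (n + 2) = (n + 1) * (k - 1))
    (hG : IsPrimalGraph G E) (huniform : ∀ e ∈ E, #e = n + 2)
    (hregular : ∀ v, #(E.filter (fun e => v ∈ e)) = k) (o v : V) :
    (n + 2) / (n + 1) * Q * radialProfile c Q (G.dist o v) ^ (n + 1) ≤
      ∑ e ∈ E.filter (fun e => v ∈ e), ∏ u ∈ e.erase v, radialProfile c Q (G.dist o u) := by
  have hφ0 (m : ℕ) : 0 ≤ radialProfile c Q m := (radialProfile_pos hc1 hQ0 m).le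
  have hφ := radialProfile_antitone hc1 <|
    le_of_pow_eq_of_pow_eq (by exact_mod_cast hk) (by linarith) hQ0.le hc hQ
  -- `G.dist o v = 0` also when `v` is not reachable from `o`; the root bound covers that case.
  rcases hd : G.dist o v with _ | m
  · calc (n + 2) / (n + 1) * Q * radialProfile c Q 0 ^ (n + 1)
        = k * radialProfile c Q 1 ^ (n + 1) := by
          rw [mul_radialProfile_one_pow (by positivity) hQ0.ne' hc hQ]; simp [radialProfile]
      _ ≤ _ := by
          simpa [hd] using mul_pow_le_sum_prod (o := o) hG hφ0 hφ huniform (hregular v)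
  · calc (n + 2) / (n + 1) * Q * radialProfile c Q (m + 1) ^ (n + 1)
        ≤ radialProfile c Q m * radialProfile c Q (m + 1) ^ n
            + (k - 1) * radialProfile c Q (m + 2) ^ (n + 1) := radialProfile_step hc1 hQ0 hQ m
      _ ≤ _ := add_mul_pow_le_sum_prod hG hφ0 hφ huniform (hregular v) hd

theorem stmt15_general (t k : ℕ) (ht : 2 ≤ t) (hk : 2 ≤ k)
    (V : Type*) [DecidableEq V]
    (E : Finset (Finset V))
    (huniform : ∀ e ∈ E, e.card = t)
    (hregular : ∀ v : V, (E.filter (fun e => v ∈ e)).card = k)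
    (G : SimpleGraph V)
    (hG : ∀ u v : V, G.Adj u v ↔ u ≠ v ∧ ∃ e ∈ E, u ∈ e ∧ v ∈ e)
    (o : V)
    (g : ℕ → ℝ)
    (hg : ∀ n : ℕ, g n =
      (1 + (((t : ℝ) * (1 - 1 / (k : ℝ))) ^ ((1 : ℝ) / ((t : ℝ) - 1)) - 1) * (n : ℝ)) /
        (((t : ℝ) - 1) * ((k : ℝ) - 1)) ^ ((n : ℝ) / (t : ℝ)))
    (x : V → ℝ) (hx : ∀ v : V, x v = g (G.dist o v)) :
    ∀ v : V,
      (∑ e ∈ E.filter (fun e => v ∈ e), ∏ u ∈ e.erase v, x u) ≥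
        ((t : ℝ) / ((t : ℝ) - 1)) * (((t : ℝ) - 1) * ((k : ℝ) - 1)) ^ ((1 : ℝ) / (t : ℝ)) *
          x v ^ (t - 1) := by
  obtain ⟨n, rfl⟩ : ∃ n, t = n + 2 := ⟨t - 2, by omega⟩
  obtain rfl : x = fun v => g (G.dist o v) := funext hx
  have hcast : ((n + 2 : ℕ) : ℝ) - 1 = n + 1 := by push_cast; ring
  simp only [hcast] at hg ⊢
  push_cast at hg ⊢
  have hkR : (2 : ℝ) ≤ k := by exact_mod_cast hk
  have hA : 1 ≤ (n + 2) * (1 - 1 / (k : ℝ)) := by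
    have : 1 / (k : ℝ) ≤ 1 / 2 := one_div_le_one_div_of_le two_pos hkR
    nlinarith [(n.cast_nonneg : (0 : ℝ) ≤ n)]
  have hq : 0 < (n + 1) * ((k : ℝ) - 1) := by nlinarith [(n.cast_nonneg : (0 : ℝ) ≤ n)]
  set c : ℝ := ((n + 2) * (1 - 1 / k)) ^ ((1 : ℝ) / (n + 1))
  set Q : ℝ := ((n + 1) * (k - 1)) ^ ((1 : ℝ) / (n + 2))
  have hQm (m : ℕ) : ((n + 1) * ((k : ℝ) - 1)) ^ ((m : ℝ) / (n + 2)) = Q ^ m := by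
    rw [← Real.rpow_mul_natCast hq.le]; ring_nf
  have hc : c ^ (n + 1) = (n + 2) * (1 - 1 / k) := by
    rw [← Real.rpow_mul_natCast (by linarith)]; push_cast
    rw [one_div_mul_cancel (by positivity), Real.rpow_one]
  have hQ : Q ^ (n + 2) = (n + 1) * (k - 1) := by
    rw [← hQm]; push_cast
    rw [div_self (by positivity), Real.rpow_one]
  obtain rfl : g = radialProfile c Q := funext fun m => by rw [hg, hQm, radialProfile]
  exact mul_radialProfile_pow_le_sum_prod (by omega) (Real.one_le_rpow hA (by positivity))
    (by positivity) hc hQ hG huniform hregular o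

theorem stmt15 (t k : ℕ) (ht : 2 ≤ t) (hk : 2 ≤ k)
    (V : Type*) [Fintype V] [DecidableEq V]
    (E : Finset (Finset V))
    (huniform : ∀ e ∈ E, e.card = t)
    (hregular : ∀ v : V, (E.filter (fun e => v ∈ e)).card = k)
    (G : SimpleGraph V)
    (hG : ∀ u v : V, G.Adj u v ↔ u ≠ v ∧ ∃ e ∈ E, u ∈ e ∧ v ∈ e)
    (hconn : G.Connected)
    (o : V)
    (g : ℕ → ℝ)
    (hg : ∀ n : ℕ, g n =
      (1 + (((t : ℝ) * (1 - 1 / (k : ℝ))) ^ ((1 : ℝ) / ((t : ℝ) - 1)) - 1) * (n : ℝ)) /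
        (((t : ℝ) - 1) * ((k : ℝ) - 1)) ^ ((n : ℝ) / (t : ℝ)))
    (x : V → ℝ) (hx : ∀ v : V, x v = g (G.dist o v)) :
    ∀ v : V,
      (∑ e ∈ E.filter (fun e => v ∈ e), ∏ u ∈ e.erase v, x u) ≥
        ((t : ℝ) / ((t : ℝ) - 1)) * (((t : ℝ) - 1) * ((k : ℝ) - 1)) ^ ((1 : ℝ) / (t : ℝ)) *
          x v ^ (t - 1) :=
  stmt15_general t k ht hk V E huniform hregular G hG o g hg x hx
end

section
/- Every finite k-regular t-uniform hypergraph H satisfies ρ(H) ≥ (t/(t-1))·((t-1)(k-1))^(1/t), where ρ(H) is the spectral radius of the adjacency tensor. -/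
/-!
The constant vector `x ≡ n ^ (-1/t)` on the `n` vertices has `∑ x_v ^ t = 1`, and double counting
the incidences (`t · |E| = n · k`) shows that it gives the value `k`, so `ρ(H) ≥ k`. The bound
`t/(t-1) · ((t-1)(k-1)) ^ (1/t) ≤ k` is Bernoulli's inequality `a ^ (1/t) ≤ 1 + (a - 1)/t`
at `a = (t-1)(k-1)`.
-/

open Finset Real

/-- The values whose supremum is the spectral radius `ρ(H)` of the adjacency tensor. -/
def lagrangianValues {V : Type*} [Fintype V] (t : ℕ) (E : Finset (Finset V)) : Set ℝ :=
  {r | ∃ x : V → ℝ, (∀ v, 0 ≤ x v) ∧ (∑ v, x v ^ t) = 1 ∧ r = ∑ e ∈ E, (t : ℝ) * ∏ v ∈ e, x v}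

section Hypergraph

variable {V : Type*} [Fintype V] {t : ℕ} {E : Finset (Finset V)}

theorem card_mul_eq_card_mul_of_uniform_of_regular [DecidableEq V] {k : ℕ}
    (huniform : ∀ e ∈ E, e.card = t) (hregular : ∀ v : V, (E.filter (fun e => v ∈ e)).card = k) :
    E.card * t = Fintype.card V * k :=
  card_mul_eq_card_mul (fun e v => v ∈ e)
    (fun e he => by simpa [bipartiteAbove, filter_mem_eq_inter] using huniform e he)
    (fun v _ => hregular v)

theorem bddAbove_lagrangianValues (ht : t ≠ 0) : BddAbove (lagrangianValues t E) := by
  refine ⟨E.card * t, ?_⟩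
  rintro r ⟨x, hx0, hx_sum, rfl⟩
  have hx_le_one : ∀ v, x v ≤ 1 := fun v =>
    (pow_le_one_iff_of_nonneg (hx0 v) ht).mp <|
      hx_sum ▸ single_le_sum (fun w _ => pow_nonneg (hx0 w) t) (mem_univ v)
  calc ∑ e ∈ E, (t : ℝ) * ∏ v ∈ e, x v ≤ ∑ _e ∈ E, (t : ℝ) * 1 := by
        gcongr with e
        exact prod_le_one (fun v _ => hx0 v) (fun v _ => hx_le_one v)
    _ = E.card * t := by simp

theorem natCast_mem_lagrangianValues_of_uniform_of_regular [DecidableEq V] [Nonempty V] {k : ℕ}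
    (ht : t ≠ 0) (huniform : ∀ e ∈ E, e.card = t)
    (hregular : ∀ v : V, (E.filter (fun e => v ∈ e)).card = k) :
    (k : ℝ) ∈ lagrangianValues t E := by
  have hcount : (E.card : ℝ) * t = Fintype.card V * k := by
    exact_mod_cast card_mul_eq_card_mul_of_uniform_of_regular huniform hregular
  set n : ℝ := (Fintype.card V : ℝ)
  have hn : 0 < n := by positivity
  set c : ℝ := n⁻¹ ^ ((1 : ℝ) / t)
  have hc_pow : c ^ t = n⁻¹ := by
    rw [← rpow_natCast, ← rpow_mul (by positivity), one_div_mul_cancel (by positivity), rpow_one]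
  refine ⟨fun _ => c, fun _ => by positivity, ?_, ?_⟩
  · simp [hc_pow, n, hn.ne']
  · calc (k : ℝ) = E.card * t * n⁻¹ := by field_simp; linarith
      _ = ∑ e ∈ E, (t : ℝ) * ∏ _v ∈ e, c := by
        rw [sum_congr rfl fun e he => by rw [prod_const, huniform e he, hc_pow]]
        simp only [sum_const, nsmul_eq_mul]
        ring

end Hypergraph

theorem div_sub_one_mul_rpow_le {t k : ℝ} (ht : 1 < t) (hk : 1 ≤ k) :
    t / (t - 1) * ((t - 1) * (k - 1)) ^ (1 / t) ≤ k := by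
  have ht0 : 0 < t := by linarith
  have ht1 : 0 < t - 1 := by linarith
  have hbernoulli : ((t - 1) * (k - 1)) ^ (1 / t) ≤ 1 + 1 / t * ((t - 1) * (k - 1) - 1) := by
    simpa using rpow_one_add_le_one_add_mul_self (s := (t - 1) * (k - 1) - 1)
      (by nlinarith) (p := 1 / t) (by positivity) (by rw [div_le_one ht0]; linarith)
  calc t / (t - 1) * ((t - 1) * (k - 1)) ^ (1 / t)
      ≤ t / (t - 1) * (1 + 1 / t * ((t - 1) * (k - 1) - 1)) := by gcongr
    _ = k := by field_simp; ring

theorem stmt17 (t k : ℕ) (ht : 2 ≤ t) (hk : 2 ≤ k)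
    (V : Type*) [Fintype V] [DecidableEq V] [Nonempty V]
    (E : Finset (Finset V))
    (huniform : ∀ e ∈ E, e.card = t)
    (hregular : ∀ v : V, (E.filter (fun e => v ∈ e)).card = k) :
    sSup {r : ℝ | ∃ x : V → ℝ, (∀ v, 0 ≤ x v) ∧ (∑ v, x v ^ t) = 1 ∧
        r = ∑ e ∈ E, (t : ℝ) * ∏ v ∈ e, x v} ≥
      ((t : ℝ) / ((t : ℝ) - 1)) * (((t : ℝ) - 1) * ((k : ℝ) - 1)) ^ ((1 : ℝ) / (t : ℝ)) := by
  have ht0 : t ≠ 0 := by omega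
  calc ((t : ℝ) / ((t : ℝ) - 1)) * (((t : ℝ) - 1) * ((k : ℝ) - 1)) ^ ((1 : ℝ) / (t : ℝ))
      ≤ k := div_sub_one_mul_rpow_le (by norm_cast) (by norm_cast; omega)
    _ ≤ sSup (lagrangianValues t E) := le_csSup (bddAbove_lagrangianValues ht0)
        (natCast_mem_lagrangianValues_of_uniform_of_regular ht0 huniform hregular)
end
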